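/- arXiv:2509.05850 — 3 statements merged into one kernel-verified Lean document; each statement's English description precedes it below -/
import Mathlib

section
/- For a submodule C ⊆ R^n over an Artinian local Frobenius ring R, the free rank of C equals dim_K ρ(C), where ρ: R^n → K^n is reduction modulo m, and also equals the maximal θ such that there exists an R-linear injection R^θ ↪ C. -/
open IsLocalRing

/-- Length of a module, as a natural number: the Krull dimension of its submodule lattice
(i.e. the supremum of lengths of chains of submodules). -/
noncomputable def lenN (R M : Type*) [CommRing R] [AddCommGroup M] [Module R M] : ℕ :=
  (WithBot.unbotD 0 (Order.krullDim (Submodule R M))).toNat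

/-- The socle of a module over a local ring: elements killed by the maximal ideal. -/
abbrev socle (R M : Type*) [CommRing R] [IsLocalRing R] [AddCommGroup M] [Module R M] :
    Submodule R M :=
  Submodule.torsionBySet R M (maximalIdeal R)

/-- type(M) = dim_K soc(M), the dimension of the socle over the residue field K = R/m. -/
noncomputable def typeOf (R M : Type*) [CommRing R] [IsLocalRing R] [AddCommGroup M]
    [Module R M] : ℕ :=
  Module.finrank (R ⧸ maximalIdeal R) (socle R M)

/-- Minimal number of generators of a module. -/
noncomputable def mu (R M : Type*) [CommRing R] [AddCommGroup M] [Module R M] : ℕ :=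
  sInf {k : ℕ | ∃ s : Finset M, s.card = k ∧ Submodule.span R (s : Set M) = ⊤}

/-- Free rank: the largest r admitting an R-linear surjection M → R^r. -/
noncomputable def freeRank (R M : Type*) [CommRing R] [AddCommGroup M] [Module R M] : ℕ :=
  sSup {r : ℕ | ∃ f : M →ₗ[R] (Fin r → R), Function.Surjective f}

/-- An Artinian local ring is Frobenius if its socle is 1-dimensional over the residue field. -/
def IsFrobenius (R : Type*) [CommRing R] [IsLocalRing R] : Prop :=
  typeOf R R = 1

/-- The orthogonal (dual) code with respect to the standard bilinear form on R^n. -/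
def dualCode {R : Type*} [CommRing R] {n : ℕ} (C : Submodule R (Fin n → R)) :
    Submodule R (Fin n → R) where
  carrier := {v | ∀ w ∈ C, ∑ i, v i * w i = 0}
  zero_mem' := by intro w _; simp
  add_mem' := by
    intro a b ha hb w hw
    simpa [add_mul, Finset.sum_add_distrib] using by rw [ha w hw, hb w hw, add_zero]
  smul_mem' := by
    intro c a ha w hw
    simp only [Set.mem_setOf_eq] at ha ⊢
    simp [Pi.smul_apply, smul_eq_mul, mul_assoc, ← Finset.mul_sum, ha w hw]

/-- The submodule H_A of vectors of R^n supported on a set A of coordinates. -/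
def suppCode (R : Type*) [CommRing R] {n : ℕ} (A : Finset (Fin n)) :
    Submodule R (Fin n → R) where
  carrier := {v | ∀ i, i ∉ A → v i = 0}
  zero_mem' := by intro i _; simp
  add_mem' := by intro a b ha hb i hi; simp [ha i hi, hb i hi]
  smul_mem' := by intro c a ha i hi; simp [ha i hi]

open Classical in
/-- Hamming weight of a vector. -/
noncomputable def wt {R : Type*} [CommRing R] {n : ℕ} (v : Fin n → R) : ℕ :=
  (Finset.univ.filter (fun i => v i ≠ 0)).card

/-- Minimum Hamming distance (= minimum weight of a nonzero codeword) of a code. -/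
noncomputable def dH {R : Type*} [CommRing R] {n : ℕ} (C : Submodule R (Fin n → R)) : ℕ :=
  sInf {w : ℕ | ∃ v ∈ C, v ≠ 0 ∧ wt v = w}

/-- The coordinatewise reduction R^n → K^n modulo the maximal ideal. -/
def rho (R : Type*) [CommRing R] [IsLocalRing R] {n : ℕ} (v : Fin n → R) :
    Fin n → R ⧸ maximalIdeal R :=
  fun i => Ideal.Quotient.mk (maximalIdeal R) (v i)

/-!
Let `K = R/m` and `d = dim_K ρ(C)`. Choose `c₁, …, c_d ∈ C` whose reductions are independent.
A `K`-linear left inverse of `e_i ↦ ρ(c_i)` lifts to an `R`-linear `A : Rⁿ → R^d`; the matrix of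
`e_i ↦ A c_i` reduces to the identity, so its determinant is a unit and `A|_C` is onto `R^d`.
Conversely, let `R^θ ↪ C ⊆ Rⁿ`. A nonzero socle element `x` of the Artinian ring `R` kills `mRⁿ`,
so a relation `∑ b_i j(e_i) ∈ mRⁿ` gives `j(x b) = 0`, hence `x b = 0` and every `b_i ∈ m`: the
reductions of the `j(e_i)` are independent and `θ ≤ d`. Surjections onto `R^r` split, so `d` is
also the largest `θ`.
-/

theorem socle_ne_bot (R : Type*) [CommRing R] [IsLocalRing R] [IsArtinianRing R] :
    socle R R ≠ ⊥ := by
  -- `m` is the only prime of `R`, so it is an associated prime of `R`: `m = ann x` with `x ≠ 0`.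
  obtain ⟨P, hP⟩ := associatedPrimes.nonempty R R
  obtain ⟨hPprime, x, rfl⟩ := isAssociatedPrime_iff.mp hP
  have hPm : (⊥ : Submodule R R).colon {x} = maximalIdeal R :=
    IsLocalRing.eq_maximalIdeal (IsArtinianRing.isMaximal_of_isPrime _)
  refine (Submodule.ne_bot_iff _).mpr ⟨x, ?_, ?_⟩
  · refine (Submodule.mem_torsionBySet_iff _ x).mpr fun a => ?_
    have ha : (a : R) ∈ (⊥ : Submodule R R).colon {x} := by rw [hPm]; exact a.2
    simpa [Submodule.mem_colon_singleton] using ha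
  · rintro rfl
    exact hPprime.ne_top (by ext; simp [Submodule.mem_colon_singleton])

section FreeRank

variable {R : Type*} [CommRing R] [IsLocalRing R]

attribute [local instance] Ideal.Quotient.field

theorem rho_eq_zero_iff {n : ℕ} {v : Fin n → R} :
    rho R v = 0 ↔ ∀ k, v k ∈ maximalIdeal R := by
  simp [funext_iff, rho, Ideal.Quotient.eq_zero_iff_mem]

theorem rho_sum_smul {ι : Type*} [Fintype ι] {n : ℕ} (b : ι → R) (v : ι → Fin n → R) :
    rho R (∑ i, b i • v i) = ∑ i, Ideal.Quotient.mk (maximalIdeal R) (b i) • rho R (v i) := by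
  ext k
  simp [rho]

theorem mem_maximalIdeal_of_injective [IsArtinianRing R] {ι κ : Type*}
    {j : (ι → R) →ₗ[R] (κ → R)} (hj : Function.Injective j) {b : ι → R}
    (hb : ∀ k, j b k ∈ maximalIdeal R) (i : ι) : b i ∈ maximalIdeal R := by
  obtain ⟨x, hx, hx0⟩ := Submodule.exists_mem_ne_zero_of_ne_bot (socle_ne_bot R)
  have hxm : ∀ y ∈ maximalIdeal R, y * x = 0 := fun y hy =>
    (Submodule.mem_torsionBySet_iff _ x).mp hx ⟨y, hy⟩
  have hxb : x • b = 0 := hj <| by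
    ext k
    simp [mul_comm x, hxm _ (hb k)]
  by_contra hbi
  exact hx0 <| ((notMem_maximalIdeal.mp hbi).mul_left_eq_zero).mp (congrFun hxb i)

theorem linearIndependent_rho_of_injective [IsArtinianRing R] {θ n : ℕ}
    {j : (Fin θ → R) →ₗ[R] (Fin n → R)} (hj : Function.Injective j) :
    LinearIndependent (R ⧸ maximalIdeal R) fun i => rho R (j (Pi.single i 1)) := by
  refine Fintype.linearIndependent_iff.mpr fun a ha => ?_
  obtain ⟨b, rfl⟩ := Ideal.Quotient.mk_surjective.comp_left a
  have hjb : rho R (j b) = 0 := by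
    rw [← (Pi.basisFun R (Fin θ)).sum_repr b]
    simpa [map_sum, rho_sum_smul] using ha
  exact fun i => Ideal.Quotient.eq_zero_iff_mem.mpr
    (mem_maximalIdeal_of_injective hj (rho_eq_zero_iff.mp hjb) i)

theorem le_finrank_span_rho_of_injective [IsArtinianRing R] {n θ : ℕ}
    {C : Submodule R (Fin n → R)} {j : (Fin θ → R) →ₗ[R] C} (hj : Function.Injective j) :
    θ ≤ Module.finrank (R ⧸ maximalIdeal R)
      (Submodule.span (R ⧸ maximalIdeal R) (rho R '' (C : Set (Fin n → R)))) := by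
  have hind :=
    linearIndependent_rho_of_injective (j := C.subtype ∘ₗ j) (C.injective_subtype.comp hj)
  have hspan := finrank_span_eq_card hind
  rw [Fintype.card_fin] at hspan
  rw [← hspan]
  exact Submodule.finrank_mono <| Submodule.span_mono <| Set.range_subset_iff.mpr
    fun i => ⟨_, (j (Pi.single i 1)).2, rfl⟩

theorem exists_linearMap_rho_apply_eq {n r : ℕ}
    (g : (Fin n → R ⧸ maximalIdeal R) →ₗ[R ⧸ maximalIdeal R] (Fin r → R ⧸ maximalIdeal R)) :
    ∃ A : (Fin n → R) →ₗ[R] (Fin r → R), ∀ w, rho R (A w) = g (rho R w) := by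
  choose M hM using fun k l =>
    Ideal.Quotient.mk_surjective (I := maximalIdeal R) (LinearMap.toMatrix' g k l)
  have hMg : (Matrix.of M).map (Ideal.Quotient.mk _) = LinearMap.toMatrix' g := by
    ext k l
    exact hM k l
  refine ⟨(Matrix.of M).mulVecLin, fun w => ?_⟩
  ext k
  rw [← LinearMap.toMatrix'_mulVec g, ← hMg]
  exact RingHom.map_mulVec (Ideal.Quotient.mk (maximalIdeal R)) (Matrix.of M) w k

theorem surjective_of_rho_map_eq {r : ℕ} {E : (Fin r → R) →ₗ[R] (Fin r → R)}
    (hE : ∀ y, rho R (E y) = rho R y) : Function.Surjective E := by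
  have hred : (Ideal.Quotient.mk (maximalIdeal R)).mapMatrix (LinearMap.toMatrix' E) = 1 := by
    ext k i
    simpa [rho, LinearMap.toMatrix'_apply, Matrix.one_apply, Pi.single_apply]
      using congrFun (hE (Pi.single i (1 : R))) k
  have hdet : IsUnit (LinearMap.toMatrix' E).det := by
    have hdet1 : Ideal.Quotient.mk (maximalIdeal R) (LinearMap.toMatrix' E).det = 1 := by
      rw [RingHom.map_det, hred, Matrix.det_one]
    refine notMem_maximalIdeal.mp fun h => one_ne_zero (α := R ⧸ maximalIdeal R) ?_
    rwa [← hdet1, Ideal.Quotient.eq_zero_iff_mem]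
  rw [← Matrix.toLin'_toMatrix' E]
  exact Matrix.mulVec_surjective_iff_isUnit.mpr ((Matrix.isUnit_iff_isUnit_det _).mpr hdet)

theorem exists_surjective_of_linearIndependent_rho {n r : ℕ} {C : Submodule R (Fin n → R)}
    {v : Fin r → Fin n → R} (hv : ∀ i, v i ∈ C)
    (hind : LinearIndependent (R ⧸ maximalIdeal R) (rho R ∘ v)) :
    ∃ f : C →ₗ[R] (Fin r → R), Function.Surjective f := by
  obtain ⟨g, hg⟩ := (Fintype.linearCombination (R ⧸ maximalIdeal R) (rho R ∘ v)
    ).exists_leftInverse_of_injective (LinearMap.ker_eq_bot.mpr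
      (linearIndependent_iff_injective_fintypeLinearCombination.mp hind))
  obtain ⟨A, hA⟩ := exists_linearMap_rho_apply_eq g
  let V := Fintype.linearCombination R v
  have hAV : Function.Surjective (A ∘ₗ V) := surjective_of_rho_map_eq fun y => by
    simp only [LinearMap.comp_apply, hA, V, Fintype.linearCombination_apply, rho_sum_smul]
    exact LinearMap.congr_fun hg _
  refine ⟨A ∘ₗ C.subtype, fun y => ?_⟩
  obtain ⟨x, rfl⟩ := hAV y
  exact ⟨⟨∑ i, x i • v i, C.sum_mem fun i _ => C.smul_mem _ (hv i)⟩, rfl⟩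

theorem exists_surjective_finrank_span_rho {n : ℕ} (C : Submodule R (Fin n → R)) :
    ∃ f : C →ₗ[R] (Fin (Module.finrank (R ⧸ maximalIdeal R)
      (Submodule.span (R ⧸ maximalIdeal R) (rho R '' (C : Set (Fin n → R))))) → R),
      Function.Surjective f := by
  obtain ⟨u, hu, -, hind⟩ := Submodule.exists_fun_fin_finrank_span_eq (R ⧸ maximalIdeal R)
    (rho R '' (C : Set (Fin n → R)))
  choose v hvC hv using hu
  exact exists_surjective_of_linearIndependent_rho hvC (by rwa [show rho R ∘ v = u from funext hv])

end FreeRank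

theorem exists_injective_of_surjective {R M P : Type*} [Semiring R] [AddCommMonoid M]
    [Module R M] [AddCommMonoid P] [Module R P] [Module.Projective R P] {f : M →ₗ[R] P}
    (hf : Function.Surjective f) : ∃ g : P →ₗ[R] M, Function.Injective g := by
  obtain ⟨g, hg⟩ := Module.projective_lifting_property f LinearMap.id hf
  exact ⟨g, Function.LeftInverse.injective (LinearMap.congr_fun hg)⟩

theorem stmt9_general (R : Type*) [CommRing R] [IsLocalRing R] [IsArtinianRing R]
    {n : ℕ} (C : Submodule R (Fin n → R)) :
    freeRank R C =
        Module.finrank (R ⧸ maximalIdeal R)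
          (Submodule.span (R ⧸ maximalIdeal R) (rho R '' (C : Set (Fin n → R)))) ∧
      freeRank R C =
        sSup {θ : ℕ | ∃ f : (Fin θ → R) →ₗ[R] C, Function.Injective f} := by
  set d := Module.finrank (R ⧸ maximalIdeal R)
    (Submodule.span (R ⧸ maximalIdeal R) (rho R '' (C : Set (Fin n → R))))
  have hsurj : IsGreatest {r : ℕ | ∃ f : C →ₗ[R] (Fin r → R), Function.Surjective f} d := by
    refine ⟨exists_surjective_finrank_span_rho C, ?_⟩
    rintro r ⟨f, hf⟩
    obtain ⟨g, hg⟩ := exists_injective_of_surjective hf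
    exact le_finrank_span_rho_of_injective hg
  have hinj : IsGreatest {θ : ℕ | ∃ f : (Fin θ → R) →ₗ[R] C, Function.Injective f} d := by
    obtain ⟨f, hf⟩ := hsurj.1
    exact ⟨exists_injective_of_surjective hf,
      fun θ ⟨j, hj⟩ => le_finrank_span_rho_of_injective hj⟩
  exact ⟨hsurj.csSup_eq, hsurj.csSup_eq.trans hinj.csSup_eq.symm⟩

/-- over a Frobenius ring, fr(C) = dim_K ρ(C) and fr(C) is the largest θ
admitting an R-linear injection R^θ ↪ C. -/
theorem stmt9 (R : Type*) [CommRing R] [IsLocalRing R] [IsArtinianRing R]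
    (hR : IsFrobenius R) {n : ℕ} (C : Submodule R (Fin n → R)) :
    freeRank R C =
        Module.finrank (R ⧸ maximalIdeal R)
          (Submodule.span (R ⧸ maximalIdeal R) (rho R '' (C : Set (Fin n → R)))) ∧
      freeRank R C =
        sSup {θ : ℕ | ∃ f : (Fin θ → R) →ₗ[R] C, Function.Injective f} :=
  stmt9_general R C
end

section
/- Let R be an Artinian local Frobenius ring and C ⊆ R^n a submodule with C ∩ C^⊥ = 0 (an LCD code). Then C is a free R-module. -/
open IsLocalRing

/-!
Over any commutative ring, if `D ≤ C` and `R^n = D ⊕ D^⊥`, then `C = D ⊕ (C ∩ D^⊥)` and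
`C ∩ D^⊥` is again LCD; so it suffices to find, inside a nonzero LCD code `C`, a free `D ≠ 0`
with `R^n = D ⊕ D^⊥`, and to induct. The span of rows with invertible Gram matrix `V Vᵀ` is such
a `D`. Over an Artinian local ring some `c · d` with `c, d ∈ C` is a unit: otherwise a nonzero
socle element `θ` of `R` gives `θ C ⊆ C ∩ C^⊥ = 0`, which puts every coordinate of every
codeword into `m`, and then the socle of `C` (nonzero, as `m` is nilpotent) lies in `C^⊥`.
Given such `c, d`, take `c` or `d` alone if `c · c` or `d · d` is a unit, and otherwise the pair,
whose Gram determinant is `-(c · d)^2` modulo `m`.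
-/

open Matrix

namespace LinearMap

variable {R M N : Type*} [CommRing R] [AddCommGroup M] [Module R M] [AddCommGroup N] [Module R N]

theorem isCompl_range_ker_of_bijective_comp {A : M →ₗ[R] N} {B : N →ₗ[R] M}
    (h : Function.Bijective (A ∘ₗ B)) : IsCompl (range B) (ker A) := by
  let e := LinearEquiv.ofBijective (A ∘ₗ B) h
  let P : Module.End R M := B ∘ₗ e.symm.toLinearMap ∘ₗ A
  have hP : IsIdempotentElem P := LinearMap.ext fun x => congrArg B (e.symm_apply_apply _)
  have hPB : P ∘ₗ B = B := LinearMap.ext fun x => congrArg B (e.symm_apply_apply x)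
  have hAP : A ∘ₗ P = A := LinearMap.ext fun x => e.apply_symm_apply (A x)
  have hrange : range P = range B :=
    le_antisymm (range_comp_le_range _ _) (hPB ▸ range_comp_le_range _ _)
  have hker : ker P = ker A :=
    le_antisymm (hAP ▸ ker_le_ker_comp _ _) (ker_le_ker_comp A (B ∘ₗ e.symm.toLinearMap))
  rw [← hrange, ← hker]
  exact IsIdempotentElem.isCompl hP

end LinearMap

theorem Module.Free.sup_of_disjoint {R M : Type*} [CommRing R] [AddCommGroup M] [Module R M]
    {p q : Submodule R M} [Module.Free R p] [Module.Free R q] (h : Disjoint p q) :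
    Module.Free R ↥(p ⊔ q) := by
  have hinj : Function.Injective (p.subtype.coprod q.subtype) := by
    rw [← LinearMap.ker_eq_bot, LinearMap.ker_coprod_of_disjoint_range _ _
      (by simpa only [Submodule.range_subtype] using h)]
    simp
  exact Module.Free.of_equiv <|
    (LinearEquiv.ofInjective _ hinj).trans (LinearEquiv.ofEq _ _ (Submodule.sup_eq_range p q).symm)

section dualCode

variable {R : Type*} [CommRing R] {n : ℕ}

theorem mem_dualCode {C : Submodule R (Fin n → R)} {v : Fin n → R} :
    v ∈ dualCode C ↔ ∀ w ∈ C, v ⬝ᵥ w = 0 := Iff.rfl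

theorem dualCode_range_mulVecLin_transpose {ι : Type*} [Fintype ι] (V : Matrix ι (Fin n) R) :
    dualCode (LinearMap.range Vᵀ.mulVecLin) = LinearMap.ker V.mulVecLin := by
  ext x
  simp only [mem_dualCode, LinearMap.mem_range, forall_exists_index, forall_apply_eq_imp_iff,
    mulVecLin_apply, LinearMap.mem_ker]
  rw [← dotProduct_eq_zero_iff]
  refine forall_congr' fun α => ?_
  rw [dotProduct_mulVec, vecMul_transpose, dotProduct_comm]

theorem isCompl_range_mulVecLin_transpose_dualCode {ι : Type*} [Fintype ι] [DecidableEq ι]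
    {V : Matrix ι (Fin n) R} (hV : IsUnit (V * Vᵀ)) :
    IsCompl (LinearMap.range Vᵀ.mulVecLin) (dualCode (LinearMap.range Vᵀ.mulVecLin)) := by
  rw [dualCode_range_mulVecLin_transpose]
  refine LinearMap.isCompl_range_ker_of_bijective_comp ?_
  rw [← mulVecLin_mul]
  exact ⟨mulVec_injective_of_isUnit hV, mulVec_surjective_iff_isUnit.2 hV⟩

theorem sup_inf_dualCode_eq {C D : Submodule R (Fin n → R)} (hDC : D ≤ C)
    (hD : Codisjoint D (dualCode D)) : D ⊔ C ⊓ dualCode D = C := by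
  rw [inf_comm, ← sup_inf_assoc_of_le _ hDC, hD.eq_top, top_inf_eq]

theorem inf_dualCode_lt {C D : Submodule R (Fin n → R)} (hDC : D ≤ C)
    (hD : Disjoint D (dualCode D)) (hD0 : D ≠ ⊥) : C ⊓ dualCode D < C :=
  inf_lt_left.2 fun hC => hD0 (hD.eq_bot_of_le (hDC.trans hC))

theorem inf_dualCode_inf_dualCode_eq_bot {C D : Submodule R (Fin n → R)} (hDC : D ≤ C)
    (hD : Codisjoint D (dualCode D)) (hC : C ⊓ dualCode C = ⊥) :
    C ⊓ dualCode D ⊓ dualCode (C ⊓ dualCode D) = ⊥ := by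
  rw [eq_bot_iff, ← hC]
  rintro x ⟨⟨hxC, hxD⟩, hx⟩
  refine ⟨hxC, fun z hz => ?_⟩
  rw [← sup_inf_dualCode_eq hDC hD] at hz
  obtain ⟨d, hd, e, he, rfl⟩ := Submodule.mem_sup.1 hz
  change x ⬝ᵥ (d + e) = 0
  rw [dotProduct_add, mem_dualCode.1 hxD d hd, mem_dualCode.1 hx e he, add_zero]

theorem free_of_isCompl_dualCode {C D : Submodule R (Fin n → R)} (hDC : D ≤ C)
    (hD : IsCompl D (dualCode D)) [Module.Free R D] [Module.Free R ↥(C ⊓ dualCode D)] :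
    Module.Free R C := by
  have : Module.Free R ↥(D ⊔ C ⊓ dualCode D) :=
    Module.Free.sup_of_disjoint (hD.disjoint.mono_right inf_le_right)
  exact Module.Free.of_equiv (LinearEquiv.ofEq _ _ (sup_inf_dualCode_eq hDC hD.codisjoint))

end dualCode

section IsLocalRing

variable {R : Type*} [CommRing R] [IsLocalRing R]

theorem exists_smul_ne_zero_and_maximalIdeal_smul_eq_zero [IsArtinianRing R] {M : Type*}
    [AddCommGroup M] [Module R M] {x : M} (hx : x ≠ 0) :
    ∃ r : R, r • x ≠ 0 ∧ ∀ s ∈ maximalIdeal R, s • r • x = 0 := by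
  obtain ⟨k, hk⟩ : IsNilpotent (maximalIdeal R) := by
    rw [← jacobson_eq_maximalIdeal ⊥ bot_ne_top]
    exact IsArtinianRing.isNilpotent_jacobson_bot
  suffices ∀ j, (∀ r ∈ maximalIdeal R ^ j, r • x = 0) →
      ∃ r : R, r • x ≠ 0 ∧ ∀ s ∈ maximalIdeal R, s • r • x = 0 from
    this k fun r hr => by simp_all
  intro j
  induction j with
  | zero => exact fun h => absurd (by simpa using h 1 (by simp)) hx
  | succ j ih =>
    intro h
    by_cases hj : ∀ r ∈ maximalIdeal R ^ j, r • x = 0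
    · exact ih hj
    simp only [not_forall] at hj
    obtain ⟨r, hr, hrx⟩ := hj
    refine ⟨r, hrx, fun s hs => ?_⟩
    rw [smul_smul]
    exact h _ (pow_succ' (maximalIdeal R) j ▸ Ideal.mul_mem_mul hs hr)

variable {n : ℕ}

theorem exists_isUnit_dotProduct_of_inf_dualCode_eq_bot [IsArtinianRing R]
    {C : Submodule R (Fin n → R)} (hC : C ⊓ dualCode C = ⊥) (hC0 : C ≠ ⊥) :
    ∃ c ∈ C, ∃ d ∈ C, IsUnit (c ⬝ᵥ d) := by
  by_contra! hm
  have hLCD : ∀ x ∈ C, (∀ z ∈ C, x ⬝ᵥ z = 0) → x = 0 := fun x hxC hxD =>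
    (Submodule.mem_bot R).1 (hC ▸ Submodule.mem_inf.2 ⟨hxC, hxD⟩)
  obtain ⟨θ, hθ, hθm⟩ :=
    exists_smul_ne_zero_and_maximalIdeal_smul_eq_zero (R := R) (one_ne_zero' R)
  simp only [smul_eq_mul, mul_one] at hθ hθm
  have hcoord : ∀ w ∈ C, ∀ i, w i ∈ maximalIdeal R := by
    intro w hw i
    have hθw : θ • w = 0 := hLCD _ (C.smul_mem θ hw) fun z hz => by
      rw [smul_dotProduct, smul_eq_mul, mul_comm]
      exact hθm _ (hm w hw z hz)
    exact (mem_maximalIdeal _).2 fun hu =>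
      hθ (hu.mul_left_eq_zero.1 (by simpa using congrFun hθw i))
  obtain ⟨x, hxC, hx0⟩ := Submodule.ne_bot_iff C |>.1 hC0
  obtain ⟨r, hrx, hrm⟩ := exists_smul_ne_zero_and_maximalIdeal_smul_eq_zero (R := R) hx0
  refine hrx (hLCD _ (C.smul_mem r hxC) fun z hz => ?_)
  rw [dotProduct_comm]
  exact Finset.sum_eq_zero fun i _ => by simpa using congrFun (hrm _ (hcoord z hz i)) i

theorem exists_isUnit_mul_transpose {c d : Fin n → R} (h : IsUnit (c ⬝ᵥ d)) :
    ∃ (k : ℕ) (V : Matrix (Fin k) (Fin n) R), 0 < k ∧ Set.range V.row ⊆ {c, d} ∧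
      IsUnit (V * Vᵀ) := by
  have single {v : Fin n → R} (hv : IsUnit (v ⬝ᵥ v)) : IsUnit (of ![v] * (of ![v])ᵀ) := by
    rwa [isUnit_iff_isUnit_det, det_fin_one]
  have range_sub {k : ℕ} (v : Fin k → Fin n → R) (hv : ∀ i, v i = c ∨ v i = d) :
      Set.range (of v).row ⊆ {c, d} :=
    Set.range_subset_iff.2 hv
  by_cases hc : IsUnit (c ⬝ᵥ c)
  · exact ⟨1, of ![c], one_pos, range_sub _ (by simp), single hc⟩
  by_cases hd : IsUnit (d ⬝ᵥ d)
  · exact ⟨1, of ![d], one_pos, range_sub _ (by simp), single hd⟩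
  refine ⟨2, of ![c, d], two_pos, range_sub _ (by simp [Fin.forall_fin_two]), ?_⟩
  rw [isUnit_iff_isUnit_det, det_fin_two]
  change IsUnit (c ⬝ᵥ c * d ⬝ᵥ d - c ⬝ᵥ d * d ⬝ᵥ c)
  by_contra hdet
  have hcd : c ⬝ᵥ d * d ⬝ᵥ c = c ⬝ᵥ c * d ⬝ᵥ d - (c ⬝ᵥ c * d ⬝ᵥ d - c ⬝ᵥ d * d ⬝ᵥ c) := by ring
  refine (mem_maximalIdeal _).1 ?_ (h.mul (dotProduct_comm c d ▸ h))
  exact hcd ▸ (maximalIdeal R).sub_mem (Ideal.mul_mem_right _ _ ((mem_maximalIdeal _).2 hc))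
    ((mem_maximalIdeal _).2 hdet)

theorem exists_le_span_pair_free_isCompl_dualCode {c d : Fin n → R} (h : IsUnit (c ⬝ᵥ d)) :
    ∃ D ≤ Submodule.span R {c, d}, D ≠ ⊥ ∧ Module.Free R D ∧ IsCompl D (dualCode D) := by
  obtain ⟨k, V, hk, hV, hG⟩ := exists_isUnit_mul_transpose h
  have hinj : Function.Injective Vᵀ.mulVecLin := by
    refine Function.Injective.of_comp (f := V.mulVec) ?_
    simpa only [Function.comp_def, mulVecLin_apply, mulVec_mulVec] using
      mulVec_injective_of_isUnit hG
  refine ⟨LinearMap.range Vᵀ.mulVecLin, ?_, fun hbot => ?_,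
    Module.Free.of_equiv (LinearEquiv.ofInjective _ hinj), isCompl_range_mulVecLin_transpose_dualCode hG⟩
  · rw [range_mulVecLin, col_transpose]
    exact Submodule.span_mono hV
  · have h0 : Vᵀ.mulVecLin (Pi.single ⟨0, hk⟩ 1) = Vᵀ.mulVecLin 0 := by
      rw [map_zero, ← LinearMap.mem_ker, LinearMap.range_eq_bot.1 hbot, LinearMap.ker_zero]
      trivial
    simpa using congrFun (hinj h0) ⟨0, hk⟩

end IsLocalRing

theorem stmt13_general (R : Type*) [CommRing R] [IsLocalRing R] [IsArtinianRing R]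
    {n : ℕ} (C : Submodule R (Fin n → R))
    (hLCD : C ⊓ dualCode C = ⊥) :
    Module.Free R C := by
  induction C using WellFoundedLT.induction with
  | ind C ih =>
  rcases eq_or_ne C ⊥ with rfl | hC0
  · exact Module.Free.of_subsingleton R _
  obtain ⟨c, hc, d, hd, hcd⟩ := exists_isUnit_dotProduct_of_inf_dualCode_eq_bot hLCD hC0
  obtain ⟨D, hDcd, hD0, hDfree, hD⟩ := exists_le_span_pair_free_isCompl_dualCode hcd
  have hDC : D ≤ C := hDcd.trans (Submodule.span_le.2 (Set.insert_subset hc (by simpa using hd)))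
  have := ih _ (inf_dualCode_lt hDC hD.disjoint hD0)
    (inf_dualCode_inf_dualCode_eq_bot hDC hD.codisjoint hLCD)
  exact free_of_isCompl_dualCode hDC hD

/-- over a Frobenius ring, an LCD code (C ∩ C^⊥ = 0) is free. -/
theorem stmt13 (R : Type*) [CommRing R] [IsLocalRing R] [IsArtinianRing R]
    (hR : IsFrobenius R) {n : ℕ} (C : Submodule R (Fin n → R))
    (hLCD : C ⊓ dualCode C = ⊥) :
    Module.Free R C :=
  stmt13_general R C hLCD
end

section
/- Let R be an Artinian local ring and C ⊆ R^n an MDS code of minimum distance d. Then there exists an R-linear map η: R^n → C restricting to the identity on C; in particular, C is a direct summand of R^n. -/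
open IsLocalRing

/-! A nonzero codeword vanishing on the first `k = n - d + 1` coordinates would have weight at
most `d - 1`, so the projection `π : R^n → R^k` onto these coordinates is injective on `C`
(the Singleton bound). The MDS condition says `λ(C) = λ(R^k)`, and an injection between modules
of the same finite length is an isomorphism `e : C ≃ R^k`; then `η = e⁻¹ ∘ π` is the retraction. -/

theorem lenN_eq_toNat_length (R M : Type*) [CommRing R] [AddCommGroup M] [Module R M] :
    lenN R M = (Module.length R M).toNat := by
  rw [lenN, ← Module.coe_length, WithBot.unbotD_coe]

theorem lenN_pi (R : Type*) [CommRing R] [IsArtinianRing R] (k : ℕ) :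
    lenN R (Fin k → R) = k * lenN R R := by
  simp [lenN_eq_toNat_length]

theorem Module.length_eq_of_lenN_eq {R M N : Type*} [CommRing R] [AddCommGroup M] [Module R M]
    [AddCommGroup N] [Module R N] [IsArtinian R M] [IsNoetherian R M] [IsArtinian R N]
    [IsNoetherian R N] (h : lenN R M = lenN R N) : Module.length R M = Module.length R N := by
  rw [lenN_eq_toNat_length, lenN_eq_toNat_length] at h
  rw [← ENat.natCast_toNat Module.length_ne_top, h, ENat.natCast_toNat Module.length_ne_top]

theorem LinearMap.surjective_of_injective_of_length_eq {R M N : Type*} [Ring R]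
    [AddCommGroup M] [Module R M] [AddCommGroup N] [Module R N] [IsArtinian R N]
    [IsNoetherian R N] (f : M →ₗ[R] N) (hf : Function.Injective f)
    (h : Module.length R M = Module.length R N) : Function.Surjective f := by
  rw [← LinearMap.range_eq_top]
  by_contra hne
  exact ((LinearEquiv.ofInjective f hf).length_eq ▸ Submodule.length_lt hne).ne h

section Hamming

variable {R : Type*} [CommRing R] {n : ℕ}

theorem wt_eq_zero_iff {v : Fin n → R} : wt v = 0 ↔ v = 0 := by
  simp [wt, Finset.filter_eq_empty_iff, funext_iff]

theorem wt_le (v : Fin n → R) : wt v ≤ n := by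
  classical
  rw [wt]
  exact (Finset.card_filter_le _ _).trans_eq (Finset.card_fin n)

theorem wt_le_of_comp_eq_zero {k : ℕ} {e : Fin k → Fin n} (he : Function.Injective e)
    {v : Fin n → R} (hv : v ∘ e = 0) : wt v ≤ n - k := by
  classical
  calc wt v ≤ (Finset.univ \ Finset.univ.image e).card := by
        refine Finset.card_le_card fun i hi => ?_
        simp only [Finset.mem_filter, Finset.mem_univ, true_and] at hi
        simp only [Finset.mem_sdiff, Finset.mem_univ, Finset.mem_image, true_and, not_exists]
        rintro j rfl
        exact hi (congrFun hv j)
    _ = n - k := by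
        rw [Finset.card_sdiff_of_subset (Finset.subset_univ _),
          Finset.card_image_of_injective _ he]
        simp

theorem dH_le_wt {C : Submodule R (Fin n → R)} {v : Fin n → R} (hv : v ∈ C) (hv0 : v ≠ 0) :
    dH C ≤ wt v :=
  Nat.sInf_le ⟨v, hv, hv0, rfl⟩

theorem dH_mem_Icc {C : Submodule R (Fin n → R)} (hC : C ≠ ⊥) : dH C ∈ Set.Icc 1 n := by
  obtain ⟨v, hv, hv0⟩ := (Submodule.ne_bot_iff C).mp hC
  obtain ⟨u, -, hu0, hu⟩ : dH C ∈ {w | ∃ v ∈ C, v ≠ 0 ∧ wt v = w} :=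
    Nat.sInf_mem ⟨_, v, hv, hv0, rfl⟩
  rw [← hu, Set.mem_Icc, Nat.one_le_iff_ne_zero, Ne, wt_eq_zero_iff]
  exact ⟨hu0, wt_le u⟩

theorem funLeft_comp_subtype_injective {C : Submodule R (Fin n → R)} {k : ℕ}
    {e : Fin k → Fin n} (he : Function.Injective e) (hk : n < k + dH C) :
    Function.Injective ((LinearMap.funLeft R R e).comp C.subtype) := by
  rw [← LinearMap.ker_eq_bot, LinearMap.ker_eq_bot']
  intro v hv
  by_contra hv0
  have hd : dH C ≤ wt (v : Fin n → R) := dH_le_wt v.2 (by simpa using hv0)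
  have hwt : wt (v : Fin n → R) ≤ n - k := wt_le_of_comp_eq_zero he hv
  have hwt0 : wt (v : Fin n → R) ≠ 0 := by simpa [wt_eq_zero_iff] using hv0
  omega

end Hamming

theorem stmt16_general (R : Type*) [CommRing R] [IsArtinianRing R]
    {n : ℕ} (C : Submodule R (Fin n → R)) (hC : C ≠ ⊥)
    (hMDS : lenN R C = (n - dH C + 1) * lenN R R) :
    (∃ η : (Fin n → R) →ₗ[R] C, ∀ v : C, η (v : Fin n → R) = v) ∧
      ∃ N : Submodule R (Fin n → R), IsCompl C N := by
  obtain ⟨k, hk⟩ : ∃ k, n - dH C + 1 = k := ⟨_, rfl⟩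
  obtain ⟨hd₁, hdn⟩ := dH_mem_Icc hC
  have hkn : k ≤ n := by omega
  let π : (Fin n → R) →ₗ[R] (Fin k → R) := LinearMap.funLeft R R (Fin.castLE hkn)
  have hinj : Function.Injective (π ∘ₗ C.subtype) :=
    funLeft_comp_subtype_injective (Fin.castLE_injective hkn) (by omega)
  have hlen : Module.length R C = Module.length R (Fin k → R) :=
    Module.length_eq_of_lenN_eq (by rw [hMDS, hk, lenN_pi])
  let e : C ≃ₗ[R] (Fin k → R) :=
    .ofBijective _ ⟨hinj, LinearMap.surjective_of_injective_of_length_eq _ hinj hlen⟩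
  let η : (Fin n → R) →ₗ[R] C := e.symm.toLinearMap ∘ₗ π
  have hη : ∀ v : C, η v = v := e.symm_apply_apply
  exact ⟨⟨η, hη⟩, LinearMap.ker η, LinearMap.isCompl_of_proj hη⟩

/-- an MDS code C ⊆ R^n admits an R-linear retraction η : R^n → C
restricting to the identity on C; in particular C is a direct summand of R^n. -/
theorem stmt16 (R : Type*) [CommRing R] [IsLocalRing R] [IsArtinianRing R]
    {n : ℕ} (C : Submodule R (Fin n → R)) (hC : C ≠ ⊥)
    (hMDS : lenN R C = (n - dH C + 1) * lenN R R) :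
    (∃ η : (Fin n → R) →ₗ[R] C, ∀ v : C, η (v : Fin n → R) = v) ∧
      ∃ N : Submodule R (Fin n → R), IsCompl C N :=
  stmt16_general R C hC hMDS
end
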